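/- arXiv:2005.10788 — 2 statements merged into one kernel-verified Lean document; each statement's English description precedes it below -/
import Mathlib

section
/- Let F: 𝔽₂ⁿ → 𝔽₂ⁿ be a quadratic APN function with n even, n ≥ 2. Then the Boolean function φ_F: 𝔽₂ⁿ → 𝔽₂ has algebraic degree n; equivalently, the Hamming weight of φ_F (the number of inputs on which φ_F equals 1) is odd. -/
open Finset

abbrev V (n : ℕ) : Type := Fin n → ZMod 2

def dotp {n : ℕ} (u y : V n) : ZMod 2 := ∑ i, u i * y i

def IsAPN {n : ℕ} (F : V n → V n) : Prop :=
  ∀ a : V n, a ≠ 0 → ∀ b : V n,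
    (Finset.univ.filter (fun x => F x + F (x + a) = b)).card ≤ 2

/-- `F` has algebraic degree exactly 2: all second derivatives vanish
(degree ≤ 2) and some first derivative is non-constant (degree ≥ 2). -/
def IsQuadratic {n : ℕ} (F : V n → V n) : Prop :=
  (∀ x y a : V n,
    F (x + y + a) + F (x + y) + F (x + a) + F x
      + F (y + a) + F y + F a + F 0 = 0) ∧
  (∃ x a : V n, F (x + a) + F x + F a + F 0 ≠ 0)

/-- `Φ` and `φ` describe the sets `B_a(F)` as affine hyperplanes. -/
def PhiSpec {n : ℕ} (F Φ : V n → V n) (φ : V n → ZMod 2) : Prop :=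
  Φ 0 = 0 ∧ φ 0 = 1 ∧
  ∀ a : V n, a ≠ 0 → Φ a ≠ 0 ∧
    {y : V n | ∃ x, F x + F (x + a) = y} = {y : V n | dotp (Φ a) y = φ a}

def wt {n : ℕ} (a : V n) : ℕ := (Finset.univ.filter (fun i => a i = 1)).card

/-- ANF coefficient of `f` at the monomial with support `a` (Möbius inversion). -/
def anfCoeff {n : ℕ} (f : V n → ZMod 2) (a : V n) : ZMod 2 :=
  ∑ x ∈ Finset.univ.filter (fun x : V n => ∀ i, x i = 1 → a i = 1), f x

/-- Algebraic degree of a Boolean function. -/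
def degB {n : ℕ} (f : V n → ZMod 2) : ℕ :=
  Finset.sup (Finset.univ.filter (fun a : V n => anfCoeff f a ≠ 0)) wt

/-- The monomial with support `a`, evaluated at `x`. -/
def mono {n : ℕ} (a x : V n) : ZMod 2 :=
  ∏ i ∈ Finset.univ.filter (fun i => a i = 1), x i

def walsh {n : ℕ} (f : V n → ZMod 2) (u : V n) : ℤ :=
  ∑ x : V n, (-1 : ℤ) ^ ((f x + dotp u x).val)

/-- The associated function `γ_G(a,b) = 1` as a proposition. -/
def gammaP {n : ℕ} (G : V n → V n) (a b : V n) : Prop :=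
  a ≠ 0 ∧ ∃ x, G x + G (x + a) = b

/-!
For `a ≠ 0` the derivative of the component `F_{Φ a} = Φ(a)·F` in direction `a` is the constant
`φ(a)`; conversely, since `B_z(F)` is an affine hyperplane, a linear structure `z` of `F_v` whose
derivative is the constant `1` has `Φ z = v`. So the nonzero `a` with `Φ a = v` and `φ a = 1` are
the linear structures of `F_v` on which the character `z ↦ F_v(z) + F_v(0)` is `1`: none, or half of
them. For quadratic `F_v` the Walsh transform satisfies
`W(u)² = 2ⁿ ∑_{z linear structure} (-1)^(u·z + F_v(z) + F_v(0))`, and by Parseval some `W(u) ≠ 0`,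
so `2ⁿ · #LS(F_v)` is a square. For `n` even, a nontrivial `LS(F_v)` has even square order, hence
order divisible by `4`, and every fibre is even. With `φ(0) = 1` the weight of `φ` is odd, and the weight
mod 2 is the ANF coefficient of `x₁⋯xₙ`.
-/

section SignCharacter

def signChar : AddChar (ZMod 2) ℤ := AddChar.zmodChar 2 (by norm_num : (-1 : ℤ) ^ 2 = 1)

lemma signChar_apply (a : ZMod 2) : signChar a = (-1) ^ a.val := rfl

lemma signChar_eq_one_iff {a : ZMod 2} : signChar a = 1 ↔ a = 0 := by
  rw [signChar_apply]; revert a; decide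

lemma ZMod.eq_one_of_ne_zero_two {a : ZMod 2} (ha : a ≠ 0) : a = 1 := Fin.eq_one_of_ne_zero a ha

variable {G : Type*} [AddCommGroup G] [Fintype G]

lemma sum_signChar_eq_zero {χ : G →+ ZMod 2} (hχ : χ ≠ 0) : ∑ x, signChar (χ x) = 0 :=
  (AddChar.sum_eq_zero_iff_ne_zero (ψ := signChar.compAddMonoidHom χ)).2 fun h =>
    hχ (AddMonoidHom.ext fun x => signChar_eq_one_iff.1 (AddChar.eq_zero_iff.1 h x))

lemma card_eq_two_mul_card_eq_one {χ : G →+ ZMod 2} (hχ : χ ≠ 0) :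
    Nat.card G = 2 * Nat.card {x // χ x = 1} := by
  classical
  obtain ⟨x₀, hx₀⟩ := DFunLike.ne_iff.1 hχ
  have hshift : {x // χ x = 0} ≃ {x // χ x = 1} :=
    (Equiv.addRight x₀).subtypeEquiv fun x => by
      simp [ZMod.eq_one_of_ne_zero_two hx₀]
  have hcompl : {x // ¬χ x = 0} ≃ {x // χ x = 1} :=
    Equiv.subtypeEquivRight fun x => ⟨ZMod.eq_one_of_ne_zero_two, fun h => h ▸ one_ne_zero⟩
  rw [← Nat.card_congr (Equiv.sumCompl fun x => χ x = 0), Nat.card_sum, Nat.card_congr hshift,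
    Nat.card_congr hcompl, two_mul]

end SignCharacter

section BooleanFunction

variable {n : ℕ}

lemma dotp_comm (u y : V n) : dotp u y = dotp y u := dotProduct_comm u y

lemma dotp_add_right (u y z : V n) : dotp u (y + z) = dotp u y + dotp u z := dotProduct_add u y z

lemma dotp_zero_right (u : V n) : dotp u 0 = 0 := dotProduct_zero u

lemma dotp_zero_left (y : V n) : dotp 0 y = 0 := zero_dotProduct y

lemma dotp_single_right (u : V n) (i : Fin n) (c : ZMod 2) : dotp u (Pi.single i c) = u i * c :=
  dotProduct_single u c i

def dotpHom (u : V n) : V n →+ ZMod 2 where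
  toFun := dotp u
  map_zero' := dotp_zero_right u
  map_add' := dotp_add_right u

@[simp] lemma dotpHom_apply (u y : V n) : dotpHom u y = dotp u y := rfl

lemma dotpHom_eq_zero_iff {u : V n} : dotpHom u = 0 ↔ u = 0 := by
  refine ⟨fun h => funext fun i => ?_, fun h => by ext y; simp [h, dotp_zero_left]⟩
  simpa [dotp_single_right] using DFunLike.congr_fun h (Pi.single i 1)

lemma sum_signChar_dotp (z : V n) :
    ∑ u : V n, signChar (dotp u z) = if z = 0 then 2 ^ n else 0 := by
  split_ifs with hz
  · simp [hz, dotp_zero_right]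
  · simp_rw [dotp_comm _ z]
    exact sum_signChar_eq_zero (χ := dotpHom z) (dotpHom_eq_zero_iff.not.2 hz)

lemma walsh_eq_sum_signChar (g : V n → ZMod 2) (u : V n) :
    walsh g u = ∑ x, signChar (g x + dotp u x) := rfl

lemma sum_walsh_sq (g : V n → ZMod 2) : ∑ u, walsh g u ^ 2 = 2 ^ n * 2 ^ n := by
  have hsq : ∀ u, walsh g u ^ 2 =
      ∑ x, ∑ y, signChar (g x + g y) * signChar (dotp u (x + y)) := by
    intro u
    simp_rw [walsh_eq_sum_signChar, sq, sum_mul_sum, ← AddChar.map_add_eq_mul, dotp_add_right]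
    refine sum_congr rfl fun x _ => sum_congr rfl fun y _ => congrArg signChar ?_
    ring
  have hxy : ∀ x y : V n, x + y = 0 ↔ y = x := fun x y => by
    rw [add_eq_zero_iff_eq_neg', ZModModule.neg_eq_self]
  calc ∑ u, walsh g u ^ 2
      = ∑ x, ∑ y, signChar (g x + g y) * ∑ u, signChar (dotp u (x + y)) := by
        simp_rw [hsq, mul_sum]; rw [sum_comm]; exact sum_congr rfl fun x _ => sum_comm
    _ = ∑ x : V n, 2 ^ n := by
        simp_rw [sum_signChar_dotp, hxy, mul_ite, mul_zero, sum_ite_eq', mem_univ, if_true,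
          ZModModule.add_self, AddChar.map_zero_eq_one, one_mul]
    _ = 2 ^ n * 2 ^ n := by simp

end BooleanFunction

section LinearStructures

variable {n : ℕ}

def HasDegreeAtMostTwo {M : Type*} [AddCommGroup M] (f : V n → M) : Prop :=
  ∀ x y a : V n, f (x + y + a) + f (x + y) + f (x + a) + f x
    + f (y + a) + f y + f a + f 0 = 0

lemma HasDegreeAtMostTwo.comp {M N : Type*} [AddCommGroup M] [AddCommGroup N] {f : V n → M}
    (hf : HasDegreeAtMostTwo f) (ψ : M →+ N) : HasDegreeAtMostTwo (ψ ∘ f) := fun x y a => by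
  simpa only [Function.comp_apply, map_add, map_zero] using congrArg ψ (hf x y a)

def linearStructures (g : V n → ZMod 2) : AddSubgroup (V n) where
  carrier := {z | ∀ x, g (x + z) + g x = g z + g 0}
  zero_mem' x := by simp [CharTwo.add_self_eq_zero]
  add_mem' {z w} hz hw x := by
    have h₁ := hz (x + w)
    have h₂ := hz w
    have h₃ := hw x
    rw [show x + (z + w) = x + w + z by abel, add_comm z w]
    grind
  neg_mem' {z} hz := by rwa [Set.mem_ofPred_eq, ZModModule.neg_eq_self]

lemma mem_linearStructures_iff {g : V n → ZMod 2} {z : V n} :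
    z ∈ linearStructures g ↔ ∀ x, g (x + z) + g x = g z + g 0 := Iff.rfl

instance (g : V n → ZMod 2) : DecidablePred (· ∈ linearStructures g) := fun z =>
  inferInstanceAs (Decidable (∀ x, g (x + z) + g x = g z + g 0))

def linearStructureValue (g : V n → ZMod 2) : linearStructures g →+ ZMod 2 where
  toFun z := g z + g 0
  map_zero' := CharTwo.add_self_eq_zero _
  map_add' z w := by have := w.2 z; rw [AddSubgroup.coe_add]; grind

def polarHom {g : V n → ZMod 2} (hg : HasDegreeAtMostTwo g) (z : V n) : V n →+ ZMod 2 where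
  toFun x := g (x + z) + g x + g z + g 0
  map_zero' := by rw [zero_add]; grind
  map_add' x y := by have := hg x y z; grind

@[simp] lemma polarHom_apply {g : V n → ZMod 2} (hg : HasDegreeAtMostTwo g) (z x : V n) :
    polarHom hg z x = g (x + z) + g x + g z + g 0 := rfl

lemma polarHom_eq_zero_iff {g : V n → ZMod 2} (hg : HasDegreeAtMostTwo g) {z : V n} :
    polarHom hg z = 0 ↔ z ∈ linearStructures g := by
  simp only [DFunLike.ext_iff, AddMonoidHom.zero_apply, polarHom_apply]
  exact forall_congr' fun x => by grind

end LinearStructures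

section Walsh

variable {n : ℕ} {g : V n → ZMod 2}

lemma sum_signChar_polarHom (hg : HasDegreeAtMostTwo g) (z : V n) :
    ∑ x, signChar (polarHom hg z x) = if z ∈ linearStructures g then 2 ^ n else 0 := by
  split_ifs with hz
  · simp [(polarHom_eq_zero_iff hg).2 hz]
  · exact sum_signChar_eq_zero ((polarHom_eq_zero_iff hg).not.2 hz)

lemma walsh_sq (hg : HasDegreeAtMostTwo g) (u : V n) :
    walsh g u ^ 2 =
      2 ^ n * ∑ z : linearStructures g, signChar (dotp u z + linearStructureValue g z) := by
  have hsplit : ∀ x z, g x + dotp u x + (g (x + z) + dotp u (x + z)) =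
      polarHom hg z x + (dotp u z + (g z + g 0)) := fun x z => by
    rw [polarHom_apply, dotp_add_right]; grind
  calc walsh g u ^ 2
      = ∑ x, ∑ z, signChar (g x + dotp u x + (g (x + z) + dotp u (x + z))) := by
        simp_rw [walsh_eq_sum_signChar, sq, sum_mul_sum, ← AddChar.map_add_eq_mul]
        exact sum_congr rfl fun x _ => (Fintype.sum_equiv (Equiv.addLeft x) _ _ fun z => rfl).symm
    _ = ∑ z, (∑ x, signChar (polarHom hg z x)) * signChar (dotp u z + (g z + g 0)) := by
        simp_rw [hsplit, AddChar.map_add_eq_mul, sum_mul]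
        exact sum_comm
    _ = ∑ z ∈ univ.filter (· ∈ linearStructures g), 2 ^ n * signChar (dotp u z + (g z + g 0)) := by
        simp_rw [sum_signChar_polarHom, ite_mul, zero_mul, sum_ite, sum_const_zero, add_zero]
    _ = _ := by
        rw [mul_sum, sum_subtype (p := (· ∈ linearStructures g)) _ (fun z => by simp)]
        rfl

lemma isSquare_two_pow_mul_card_linearStructures (hg : HasDegreeAtMostTwo g) :
    IsSquare (2 ^ n * Nat.card (linearStructures g)) := by
  obtain ⟨u, hu⟩ : ∃ u, walsh g u ≠ 0 := by
    by_contra! h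
    simpa [h] using sum_walsh_sq g
  set χ : linearStructures g →+ ZMod 2 :=
    (dotpHom u).comp (linearStructures g).subtype + linearStructureValue g
  have hwalsh : walsh g u ^ 2 = 2 ^ n * ∑ z, signChar (χ z) := walsh_sq hg u
  have hχ : χ = 0 := by
    by_contra hχ
    rw [sum_signChar_eq_zero hχ, mul_zero] at hwalsh
    exact hu (pow_eq_zero_iff two_ne_zero |>.1 hwalsh)
  have hsq : walsh g u ^ 2 = 2 ^ n * Nat.card (linearStructures g) := by
    simp [hwalsh, hχ, Nat.card_eq_fintype_card]
  refine ⟨(walsh g u).natAbs, ?_⟩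
  have h : ((walsh g u).natAbs * (walsh g u).natAbs : ℤ) = walsh g u ^ 2 := by
    rw [sq, Int.natAbs_mul_self']
  exact_mod_cast (h.trans hsq).symm

end Walsh

lemma Nat.isSquare_of_isSquare_sq_mul {a c : ℕ} (ha : a ≠ 0) (h : IsSquare (a ^ 2 * c)) :
    IsSquare c := by
  obtain ⟨s, hs⟩ := h
  obtain ⟨t, rfl⟩ : a ∣ s := (Nat.pow_dvd_pow_iff two_ne_zero).1 ⟨c, by rw [sq s, hs]⟩
  exact ⟨t, Nat.eq_of_mul_eq_mul_left (pow_pos (Nat.pos_of_ne_zero ha) 2) (by rw [hs]; ring)⟩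

lemma Nat.four_dvd_of_isSquare_of_even {c : ℕ} (hs : IsSquare c) (he : Even c) : 4 ∣ c := by
  obtain ⟨t, rfl⟩ := hs
  obtain ⟨k, rfl⟩ := (Nat.even_mul.1 he).elim id id
  exact ⟨k * k, by ring⟩

lemma even_card_linearStructureValue_eq_one {n : ℕ} (hn : Even n) {g : V n → ZMod 2}
    (hg : HasDegreeAtMostTwo g) :
    Even (Nat.card {z : linearStructures g // linearStructureValue g z = 1}) := by
  by_cases hχ : linearStructureValue g = 0
  · simp [hχ]
  obtain ⟨m, rfl⟩ := hn
  have hsq : IsSquare (Nat.card (linearStructures g)) := by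
    refine Nat.isSquare_of_isSquare_sq_mul (a := 2 ^ m) (by positivity) ?_
    rw [← pow_mul, mul_two]
    exact isSquare_two_pow_mul_card_linearStructures hg
  have hcard := card_eq_two_mul_card_eq_one hχ
  obtain ⟨k, hk⟩ := Nat.four_dvd_of_isSquare_of_even hsq (hcard ▸ even_two_mul _)
  exact ⟨k, by omega⟩

lemma ZMod.eq_one_and_eq_one_of_mul_eq_one_two {a b : ZMod 2} (h : a * b = 1) :
    a = 1 ∧ b = 1 := by
  revert a b; decide

lemma eq_of_forall_dotp_eq_imp_dotp_eq_one {n : ℕ} {u v : V n} {c : ZMod 2} (hu : u ≠ 0)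
    (h : ∀ y, dotp u y = c → dotp v y = 1) : v = u := by
  obtain ⟨i, hi⟩ := Function.ne_iff.1 hu
  replace hi : u i = 1 := ZMod.eq_one_of_ne_zero_two hi
  -- `y + (u·y + c) eᵢ` lies on the hyperplane `u·y = c`
  have key : ∀ y, dotp v y + (dotp u y + c) * v i = 1 := fun y => by
    have hy := h (y + Pi.single i (dotp u y + c))
      (by rw [dotp_add_right, dotp_single_right, hi]; grind)
    rwa [dotp_add_right, dotp_single_right, mul_comm] at hy
  obtain ⟨rfl, hvi⟩ : c = 1 ∧ v i = 1 := by
    have h0 := key 0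
    rw [dotp_zero_right, dotp_zero_right, zero_add, zero_add] at h0
    exact ZMod.eq_one_and_eq_one_of_mul_eq_one_two h0
  funext j
  have hj := key (Pi.single j 1)
  rw [dotp_single_right, dotp_single_right, mul_one, mul_one, hvi] at hj
  grind

section DerivativeImages

variable {n : ℕ} {F Φ : V n → V n} {φ : V n → ZMod 2}

def HasHyperplaneDerivImages (F Φ : V n → V n) (φ : V n → ZMod 2) : Prop :=
  ∀ a : V n, a ≠ 0 → Φ a ≠ 0 ∧
    {y : V n | ∃ x, F x + F (x + a) = y} = {y : V n | dotp (Φ a) y = φ a}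

lemma HasHyperplaneDerivImages.dotp_eq (h : HasHyperplaneDerivImages F Φ φ) {a : V n}
    (ha : a ≠ 0) (x : V n) : dotp (Φ a) (F x + F (x + a)) = φ a := by
  have hy : F x + F (x + a) ∈ {y : V n | ∃ x', F x' + F (x' + a) = y} := ⟨x, rfl⟩
  rwa [(h a ha).2] at hy

lemma HasHyperplaneDerivImages.fiber_iff (h : HasHyperplaneDerivImages F Φ φ) (v a : V n) :
    (a ≠ 0 ∧ φ a = 1 ∧ Φ a = v) ↔
      a ∈ linearStructures (dotpHom v ∘ F) ∧ (dotpHom v ∘ F) a + (dotpHom v ∘ F) 0 = 1 := by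
  simp only [mem_linearStructures_iff, Function.comp_apply, dotpHom_apply]
  constructor
  · rintro ⟨ha, hφ, rfl⟩
    have hd := h.dotp_eq ha
    have h0 := hd 0
    simp only [dotp_add_right, zero_add] at hd h0
    exact ⟨fun x => by linear_combination hd x - h0, by linear_combination h0 + hφ⟩
  · rintro ⟨hmem, h1⟩
    have ha : a ≠ 0 := by
      rintro rfl
      exact zero_ne_one ((CharTwo.add_self_eq_zero _).symm.trans h1)
    have hΦ : Φ a = v := by
      refine (eq_of_forall_dotp_eq_imp_dotp_eq_one (c := φ a) (h a ha).1 fun y hy => ?_).symm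
      have hy' : y ∈ {y : V n | ∃ x, F x + F (x + a) = y} := by rw [(h a ha).2]; exact hy
      obtain ⟨x, rfl⟩ := hy'
      rw [dotp_add_right]
      grind
    have hd := h.dotp_eq ha 0
    rw [hΦ, dotp_add_right, zero_add] at hd
    exact ⟨ha, by grind, hΦ⟩

lemma HasHyperplaneDerivImages.even_card_filter_ne_zero (hn : Even n)
    (hF : HasDegreeAtMostTwo F) (h : HasHyperplaneDerivImages F Φ φ) :
    Even (univ.filter (fun a : V n => a ≠ 0 ∧ φ a = 1)).card := by
  rw [card_eq_sum_card_fiberwise (f := Φ) (t := univ) fun _ _ => mem_coe.2 (mem_univ _)]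
  refine even_sum _ fun v _ => ?_
  set g := dotpHom v ∘ F
  have e : {a // (a ≠ 0 ∧ φ a = 1) ∧ Φ a = v} ≃
      {z : linearStructures g // linearStructureValue g z = 1} :=
    (Equiv.subtypeEquivRight fun a => and_assoc.trans (h.fiber_iff v a)).trans
      (Equiv.subtypeSubtypeEquivSubtypeInter (· ∈ linearStructures g) (g · + g 0 = 1)).symm
  rw [filter_filter, ← Fintype.card_subtype, ← Nat.card_eq_fintype_card, Nat.card_congr e]
  exact even_card_linearStructureValue_eq_one hn (hF.comp _)

lemma HasHyperplaneDerivImages.odd_card_filter (hn : Even n) (hF : HasDegreeAtMostTwo F)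
    (h : HasHyperplaneDerivImages F Φ φ) (hφ : φ 0 = 1) :
    Odd (univ.filter (fun a : V n => φ a = 1)).card := by
  have hsplit : univ.filter (fun a : V n => φ a = 1)
      = insert 0 (univ.filter (fun a : V n => a ≠ 0 ∧ φ a = 1)) := by
    ext a
    by_cases ha : a = 0 <;> simp [ha, hφ]
  rw [hsplit, card_insert_of_notMem (by simp)]
  exact (h.even_card_filter_ne_zero hn hF).add_one

end DerivativeImages

section AlgebraicDegree

variable {n : ℕ}

lemma ZMod.sum_eq_card_filter_eq_one {α : Type*} [Fintype α] (f : α → ZMod 2) :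
    ∑ x, f x = (univ.filter (f · = 1)).card := by
  rw [← sum_boole]
  exact sum_congr rfl fun x _ => by generalize f x = c; revert c; decide

lemma anfCoeff_one (f : V n → ZMod 2) : anfCoeff f 1 = ∑ x, f x := by
  simp [anfCoeff]

lemma wt_one : wt (1 : V n) = n := by simp [wt]

lemma degB_le (f : V n → ZMod 2) : degB f ≤ n :=
  Finset.sup_le fun a _ => (card_filter_le _ _).trans (by simp)

lemma degB_eq_of_odd_card {f : V n → ZMod 2} (h : Odd (univ.filter (f · = 1)).card) :
    degB f = n := by
  have hone : (1 : V n) ∈ univ.filter (fun a => anfCoeff f a ≠ 0) := by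
    rw [mem_filter, anfCoeff_one, ZMod.sum_eq_card_filter_eq_one, ZMod.natCast_eq_one_iff_odd.2 h]
    exact ⟨mem_univ _, one_ne_zero⟩
  have hle : wt (1 : V n) ≤ degB f := Finset.le_sup hone
  rw [wt_one] at hle
  exact le_antisymm (degB_le f) hle

end AlgebraicDegree

theorem stmt5_general {n : ℕ} (hn : Even n) (F Φ : V n → V n) (φ : V n → ZMod 2)
    (hq : IsQuadratic F) (hspec : PhiSpec F Φ φ) :
    degB φ = n ∧ Odd (Finset.univ.filter (fun a : V n => φ a = 1)).card := by
  have hodd := HasHyperplaneDerivImages.odd_card_filter hn hq.1 hspec.2.2 hspec.2.1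
  exact ⟨degB_eq_of_odd_card hodd, hodd⟩

theorem stmt5 {n : ℕ} (hn : Even n) (h2 : 2 ≤ n) (F Φ : V n → V n) (φ : V n → ZMod 2)
    (hq : IsQuadratic F) (hAPN : IsAPN F) (hspec : PhiSpec F Φ φ) :
    degB φ = n ∧ Odd (Finset.univ.filter (fun a : V n => φ a = 1)).card :=
  stmt5_general hn F Φ φ hq hspec
end

section
/- Let F: 𝔽₂ⁿ → 𝔽₂ⁿ be a quadratic APN function with n even, n ≥ 4. Then each coordinate function (Φ_F)_i of Φ_F can be written as (Φ_F)_i(x) = f_i(x) + λ_i·(x₂x₃⋯x_n + x₁x₃⋯x_n + ⋯ + x₁x₂⋯x_{n−1} + x₁x₂⋯x_n), where f_i is a Boolean function of algebraic degree at most n−2 and λ_i ∈ 𝔽₂. In other words, in the algebraic normal form of (Φ_F)_i, either no monomial of degree ≥ n−1 occurs, or all n monomials of degree n−1 together with the monomial of degree n occur. -/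
open Finset

/-! The fibre of `Φ` over `u ≠ 0` consists of the nonzero elements of the radical of
`B_u(x, y) = u · (F(x + y) + F(x) + F(y) + F(0))`, the polar form of `q_u(a) = u · (F(a) + F(0))`.
If a quadratic function `q` vanishes on the radical of its polar form, the square of its Gauss sum
`∑ₓ (-1)^q(x)` is `|V| · |radical|`; adding a linear function achieves this vanishing without
changing the polar form. So for `n` even the radical has square order, and every linear functional
sums to `0` over it, because a nonzero additive map from a group of square order onto `𝔽₂` has
fibres of even size. Summing `a ↦ ℓ_{Φ(a)}(a)` fibre by fibre gives `∑ₓ xⱼ Φ(x)ᵢ = 0`, which is the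
difference of the ANF coefficients of `Φᵢ` at `x₁⋯xₙ` and at the monomial omitting `xⱼ`. -/

namespace QuadraticAPN

def sign : AddChar (ZMod 2) ℤ := AddChar.zmodChar 2 (by norm_num : (-1 : ℤ) ^ 2 = 1)

lemma sign_apply (t : ZMod 2) : sign t = 1 - 2 * (t.val : ℤ) := by
  fin_cases t <;> rfl

section AddGroup

variable {H : Type*} [AddCommGroup H] [Fintype H]

lemma sum_sign_eq_zero {f : H →+ ZMod 2} (hf : f ≠ 0) : ∑ h, sign (f h) = 0 := by
  obtain ⟨h, hh⟩ := DFunLike.ne_iff.mp hf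
  refine AddChar.sum_eq_zero_of_ne_one (ψ := sign.compAddMonoidHom f)
    (AddChar.ne_one_iff.mpr ⟨h, ?_⟩)
  have sign_ne_one : ∀ t : ZMod 2, t ≠ 0 → 1 - 2 * (t.val : ℤ) ≠ 1 := by decide
  rw [AddChar.compAddMonoidHom_apply, sign_apply]
  exact sign_ne_one _ hh

lemma sum_eq_zero_of_isSquare_card (f : H →+ ZMod 2) (hH : IsSquare (Fintype.card H)) :
    ∑ h, f h = 0 := by
  rcases eq_or_ne f 0 with rfl | hf
  · simp
  obtain ⟨k, hk⟩ := hH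
  have hcard : k * k = 2 * ∑ h, (f h).val := by
    have := sum_sign_eq_zero hf
    simp only [sign_apply, sum_sub_distrib, sum_const, card_univ, nsmul_eq_mul, mul_one,
      ← mul_sum] at this
    rw [← hk]
    exact_mod_cast sub_eq_zero.mp this
  obtain ⟨j, rfl⟩ : Even k := by
    have : Even (k * k) := ⟨_, hcard.trans (two_mul _)⟩
    exact (Nat.even_mul.mp this).elim id id
  have hval : ∑ h, (f h).val = 2 * (j * j) := by linarith
  calc ∑ h, f h = ((∑ h, (f h).val : ℕ) : ZMod 2) := by simp [ZMod.natCast_val]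
    _ = 0 := by rw [hval]; push_cast; rw [show (2 : ZMod 2) = 0 from rfl, zero_mul]

end AddGroup

lemma isSquare_of_isSquare_mul {a b : ℕ} (ha : IsSquare a) (ha0 : a ≠ 0)
    (hab : IsSquare (a * b)) : IsSquare b := by
  rw [← Rat.isSquare_natCast_iff] at ha hab ⊢
  have := hab.div ha
  rwa [Nat.cast_mul, mul_div_cancel_left₀ _ (by exact_mod_cast ha0)] at this

section Polar

variable {M : Type*} [AddCommGroup M] [Module (ZMod 2) M]

def IsPolar (B : LinearMap.BilinForm (ZMod 2) M) (q : M → ZMod 2) : Prop :=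
  ∀ x y, q (x + y) = q x + q y + B x y

variable {q : M → ZMod 2} {B : LinearMap.BilinForm (ZMod 2) M}

lemma IsPolar.map_zero (hq : IsPolar B q) : q 0 = 0 := by
  simpa using hq 0 0

lemma IsPolar.apply_comm (hq : IsPolar B q) (x y : M) : B x y = B y x := by
  have := (hq x y).symm.trans (add_comm x y ▸ hq y x)
  linear_combination this

lemma IsPolar.add_linearMap (hq : IsPolar B q) (L : M →ₗ[ZMod 2] ZMod 2) : IsPolar B (q + L) := by
  intro x y
  simp only [Pi.add_apply, hq x y, map_add]
  ring

variable [Fintype M]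

lemma IsPolar.sum_sign (hq : IsPolar B q) (z : M) :
    ∑ x, sign (B x z) = if B z = 0 then (Fintype.card M : ℤ) else 0 := by
  split_ifs with hz
  · simp [hq.apply_comm _ z, hz]
  · refine sum_sign_eq_zero (f := (B.flip z).toAddMonoidHom) fun h => hz ?_
    ext x
    simpa [hq.apply_comm z x] using DFunLike.congr_fun h x

lemma IsPolar.sq_sum_sign (hq : IsPolar B q) (hker : ∀ z ∈ LinearMap.ker B, q z = 0) :
    (∑ x, sign (q x)) ^ 2 = Fintype.card M * Nat.card (LinearMap.ker B) := by
  classical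
  calc (∑ x, sign (q x)) ^ 2 = ∑ x, ∑ z, sign (q x) * sign (q (x + z)) := by
        rw [sq, sum_mul_sum]
        exact sum_congr rfl fun x _ => (Equiv.sum_comp (Equiv.addLeft x) _).symm
    _ = ∑ z, sign (q z) * ∑ x, sign (B x z) := by
        rw [sum_comm]
        refine sum_congr rfl fun z _ => ?_
        rw [mul_sum]
        refine sum_congr rfl fun x _ => ?_
        rw [← AddChar.map_add_eq_mul, ← AddChar.map_add_eq_mul, hq, ← add_assoc,
          ← add_assoc, CharTwo.add_self_eq_zero, zero_add]
    _ = ∑ z ∈ univ.filter (· ∈ LinearMap.ker B), (Fintype.card M : ℤ) := by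
        rw [sum_filter]
        refine sum_congr rfl fun z _ => ?_
        rw [hq.sum_sign, LinearMap.mem_ker]
        split_ifs with hz
        · rw [hker z hz, AddChar.map_zero_eq_one, one_mul]
        · rw [mul_zero]
    _ = Fintype.card M * Nat.card (LinearMap.ker B) := by
        rw [sum_const, nsmul_eq_mul, mul_comm, Nat.card_eq_fintype_card, Fintype.card_subtype]

lemma IsPolar.isSquare_card_ker (hq : IsPolar B q) (hM : IsSquare (Fintype.card M)) :
    IsSquare (Nat.card (LinearMap.ker B)) := by
  let qKer : LinearMap.ker B →+ ZMod 2 :=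
    { toFun := fun z => q z
      map_zero' := hq.map_zero
      map_add' := fun a b => by simp [hq a b, LinearMap.mem_ker.mp a.2] }
  -- Adding a linear extension of `q` restricted to the radical leaves the polar form
  -- unchanged and makes `q` vanish on the radical.
  obtain ⟨L, hL⟩ := LinearMap.exists_extend (qKer.toZModLinearMap 2)
  have hkerL : ∀ z ∈ LinearMap.ker B, (q + L) z = 0 := by
    intro z hz
    have : L z = q z := LinearMap.congr_fun hL ⟨z, hz⟩
    rw [Pi.add_apply, this, CharTwo.add_self_eq_zero]
  refine isSquare_of_isSquare_mul hM Fintype.card_ne_zero ?_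
  rw [← Int.isSquare_natCast_iff]
  push_cast
  rw [← (hq.add_linearMap L).sq_sum_sign hkerL]
  exact IsSquare.sq _

lemma IsPolar.sum_ker_eq_zero [Fintype (LinearMap.ker B)] (hq : IsPolar B q)
    (hM : IsSquare (Fintype.card M)) (ℓ : M →ₗ[ZMod 2] ZMod 2) :
    ∑ z : LinearMap.ker B, ℓ z = 0 := by
  refine sum_eq_zero_of_isSquare_card
    (ℓ.toAddMonoidHom.comp (LinearMap.ker B).subtype.toAddMonoidHom) ?_
  rw [← Nat.card_eq_fintype_card]
  exact hq.isSquare_card_ker hM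

end Polar

variable {n : ℕ}

lemma V.add_add_cancel (x y : V n) : x + y + y = x :=
  funext fun _ => CharTwo.add_cancel_right _ _

lemma dotp_add (u y z : V n) : dotp u (y + z) = dotp u y + dotp u z :=
  dotProduct_add u y z

lemma dotp_single_one (u : V n) (i : Fin n) : dotp u (Pi.single i 1) = u i :=
  dotProduct_single_one u i

lemma eq_of_dotp_eq_zero_imp {u c : V n} (hu : u ≠ 0)
    (h : ∀ y, dotp c y = 0 → dotp u y = 0) : u = c := by
  obtain ⟨i, hi⟩ : ∃ i, u i ≠ 0 := Function.ne_iff.mp hu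
  rw [← dotp_single_one u i] at hi
  -- `u · eᵢ = c · eᵢ = 1`, and translating by `eᵢ` swaps the two cosets of `ker (c · -)`.
  have key : ∀ y, dotp u y = dotp c y := by
    intro y
    have h1 := h y
    have h2 := h (y + Pi.single i 1)
    have h3 := h (Pi.single i 1)
    rw [dotp_add, dotp_add] at h2
    revert h1 h2 h3 hi
    generalize dotp u y = a, dotp c y = b, dotp u (Pi.single i 1) = a',
      dotp c (Pi.single i 1) = b'
    revert a b a' b'
    decide
  funext j
  simpa only [dotp_single_one] using key (Pi.single j 1)

def DegLeTwo (F : V n → V n) : Prop :=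
  ∀ x y a : V n,
    F (x + y + a) + F (x + y) + F (x + a) + F x + F (y + a) + F y + F a + F 0 = 0

def secondDeriv (F : V n → V n) (x y : V n) : V n := F (x + y) + F x + F y + F 0

variable {F : V n → V n}

lemma secondDeriv_comm (F : V n → V n) (x y : V n) :
    secondDeriv F x y = secondDeriv F y x := by
  simp only [secondDeriv, add_comm x y]
  abel

lemma secondDeriv_eq_add_derivative (F : V n → V n) (a x : V n) :
    secondDeriv F a x = (F x + F (x + a)) + (F 0 + F (0 + a)) := by
  simp only [secondDeriv, zero_add, add_comm a x]
  abel

lemma secondDeriv_add_left (hF : DegLeTwo F) (x y z : V n) :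
    secondDeriv F (x + y) z = secondDeriv F x z + secondDeriv F y z := by
  funext k
  have := congrFun (hF x y z) k
  simp only [secondDeriv, Pi.add_apply, Pi.zero_apply] at this ⊢
  grind

def polarForm (hF : DegLeTwo F) (u : V n) : LinearMap.BilinForm (ZMod 2) (V n) :=
  have add_left (x x' y : V n) : dotp u (secondDeriv F (x + x') y) =
      dotp u (secondDeriv F x y) + dotp u (secondDeriv F x' y) := by
    rw [secondDeriv_add_left hF, dotp_add]
  LinearMap.mk₂ (ZMod 2) (fun x y => dotp u (secondDeriv F x y)) add_left
    (fun c x y => ZMod.map_smul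
      (AddMonoidHom.mk' (fun x => dotp u (secondDeriv F x y)) fun x x' => add_left x x' y) c x)
    (fun x y y' => by simpa only [secondDeriv_comm F x] using add_left y y' x)
    (fun c x y => by
      rw [secondDeriv_comm F x, secondDeriv_comm F x]
      exact ZMod.map_smul
        (AddMonoidHom.mk' (fun y => dotp u (secondDeriv F y x)) fun y y' => add_left y y' x) c y)

lemma isPolar_polarForm (hF : DegLeTwo F) (u : V n) :
    IsPolar (polarForm hF u) fun a => dotp u (F a + F 0) := by
  intro x y
  change dotp u (F (x + y) + F 0) =
    dotp u (F x + F 0) + dotp u (F y + F 0) + dotp u (secondDeriv F x y)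
  rw [← dotp_add, ← dotp_add]
  congr 1
  funext k
  simp only [secondDeriv, Pi.add_apply]
  grind

end QuadraticAPN

namespace PhiSpec

open QuadraticAPN

variable {n : ℕ} {F Φ : V n → V n} {φ : V n → ZMod 2} {a : V n}

lemma dotp_derivative (hspec : PhiSpec F Φ φ) (ha : a ≠ 0) (x : V n) :
    dotp (Φ a) (F x + F (x + a)) = φ a := by
  have hx : F x + F (x + a) ∈ {y : V n | ∃ x, F x + F (x + a) = y} := ⟨x, rfl⟩
  rwa [(hspec.2.2 a ha).2] at hx

lemma dotp_secondDeriv (hspec : PhiSpec F Φ φ) (ha : a ≠ 0) (x : V n) :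
    dotp (Φ a) (secondDeriv F a x) = 0 := by
  rw [secondDeriv_eq_add_derivative, dotp_add, hspec.dotp_derivative ha,
    hspec.dotp_derivative ha, CharTwo.add_self_eq_zero]

lemma exists_secondDeriv_eq (hspec : PhiSpec F Φ φ) (ha : a ≠ 0) {y : V n}
    (hy : dotp (Φ a) y = 0) : ∃ x, secondDeriv F a x = y := by
  have hy' : y + (F 0 + F (0 + a)) ∈ {y : V n | dotp (Φ a) y = φ a} := by
    rw [Set.mem_ofPred_eq, dotp_add, hy, zero_add, hspec.dotp_derivative ha]
  rw [← (hspec.2.2 a ha).2] at hy'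
  obtain ⟨x, hx⟩ := hy'
  exact ⟨x, by rw [secondDeriv_eq_add_derivative, hx, V.add_add_cancel]⟩

lemma eq_zero_iff (hspec : PhiSpec F Φ φ) : Φ a = 0 ↔ a = 0 :=
  ⟨fun h => by_contra fun ha => (hspec.2.2 a ha).1 h, fun h => h ▸ hspec.1⟩

lemma eq_iff_mem_ker (hF : DegLeTwo F) (hspec : PhiSpec F Φ φ) (ha : a ≠ 0) {u : V n}
    (hu : u ≠ 0) : Φ a = u ↔ a ∈ LinearMap.ker (polarForm hF u) := by
  rw [LinearMap.mem_ker, LinearMap.ext_iff]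
  refine ⟨fun h x => h ▸ hspec.dotp_secondDeriv ha x, fun h => ?_⟩
  refine (eq_of_dotp_eq_zero_imp hu fun y hy => ?_).symm
  obtain ⟨x, rfl⟩ := hspec.exists_secondDeriv_eq ha hy
  exact h x

theorem sum_dual_eq_zero (hn : Even n) (hF : DegLeTwo F) (hspec : PhiSpec F Φ φ)
    (ℓ : V n → Module.Dual (ZMod 2) (V n)) : ∑ a, ℓ (Φ a) a = 0 := by
  classical
  have hcard : IsSquare (Fintype.card (V n)) := by simpa using hn.isSquare_pow 2
  rw [← sum_fiberwise univ Φ]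
  refine sum_eq_zero fun u _ => ?_
  rcases eq_or_ne u 0 with rfl | hu
  · refine sum_eq_zero fun a ha => ?_
    obtain rfl := hspec.eq_zero_iff.mp (mem_filter.mp ha).2
    exact map_zero _
  calc ∑ a ∈ univ with Φ a = u, ℓ (Φ a) a
      = ∑ a ∈ univ with a ∈ LinearMap.ker (polarForm hF u), ℓ u a := by
        rw [sum_filter, sum_filter]
        refine sum_congr rfl fun a _ => ?_
        rcases eq_or_ne a 0 with rfl | ha
        · simp
        by_cases h : Φ a = u
        · rw [if_pos h, if_pos ((hspec.eq_iff_mem_ker hF ha hu).mp h), h]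
        · rw [if_neg h, if_neg (mt (hspec.eq_iff_mem_ker hF ha hu).mpr h)]
    _ = ∑ z : LinearMap.ker (polarForm hF u), ℓ u z := sum_subtype _ (by simp) _
    _ = 0 := (isPolar_polarForm hF u).sum_ker_eq_zero hcard (ℓ u)

theorem sum_mul_eq_zero (hn : Even n) (hF : DegLeTwo F) (hspec : PhiSpec F Φ φ)
    (i j : Fin n) : ∑ x, x j * Φ x i = 0 := by
  have := hspec.sum_dual_eq_zero hn hF fun u => u i • LinearMap.proj j
  simpa only [LinearMap.smul_apply, LinearMap.proj_apply, smul_eq_mul, mul_comm] using this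

end PhiSpec

namespace QuadraticAPN

variable {n : ℕ}

lemma anfCoeff_add (f g : V n → ZMod 2) (c : V n) :
    anfCoeff (f + g) c = anfCoeff f c + anfCoeff g c :=
  sum_add_distrib

lemma anfCoeff_smul (t : ZMod 2) (f : V n → ZMod 2) (c : V n) :
    anfCoeff (t • f) c = t * anfCoeff f c :=
  (mul_sum _ _ _).symm

lemma anfCoeff_sum {ι : Type*} (s : Finset ι) (f : ι → V n → ZMod 2) (c : V n) :
    anfCoeff (∑ a ∈ s, f a) c = ∑ a ∈ s, anfCoeff (f a) c := by
  simp only [anfCoeff, Finset.sum_apply]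
  exact sum_comm

lemma anfCoeff_mono (a c : V n) : anfCoeff (mono a) c = if a = c then 1 else 0 := by
  have coord : ∀ α γ : ZMod 2,
      ∑ t : ZMod 2, (if t = 1 → γ = 1 then 1 else 0) * (if α = 1 then t else 1) =
        if α = γ then 1 else 0 := by
    decide
  calc anfCoeff (mono a) c
      = ∑ x : V n, ∏ i, (if x i = 1 → c i = 1 then 1 else 0) * (if a i = 1 then x i else 1) := by
        rw [anfCoeff, sum_filter]
        refine sum_congr rfl fun x _ => ?_
        rw [prod_mul_distrib, Fintype.prod_boole, mono, prod_filter, ite_mul, one_mul, zero_mul]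
        congr
    _ = ∏ i, ∑ t : ZMod 2, (if t = 1 → c i = 1 then 1 else 0) * (if a i = 1 then t else 1) :=
        (Fintype.prod_sum fun i t => (if t = 1 → c i = 1 then 1 else 0) *
          (if a i = 1 then t else 1)).symm
    _ = if a = c then 1 else 0 := by
        simp only [coord, Fintype.prod_boole, funext_iff]
        congr

lemma anfCoeff_one (g : V n → ZMod 2) : anfCoeff g 1 = ∑ x, g x := by
  rw [anfCoeff, filter_true_of_mem fun x _ i _ => rfl]

lemma anfCoeff_eq_sum_add_sum_mul (g : V n → ZMod 2) {c : V n} {j : Fin n} (hcj : c j ≠ 1)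
    (hc : ∀ i, i ≠ j → c i = 1) : anfCoeff g c = ∑ x, g x + ∑ x, x j * g x := by
  rw [← sum_add_distrib, anfCoeff, sum_filter]
  refine sum_congr rfl fun x _ => ?_
  have hle : (∀ i, x i = 1 → c i = 1) ↔ x j ≠ 1 :=
    ⟨fun h hx => hcj (h j hx), fun h i hx => hc i fun hij => h (hij ▸ hx)⟩
  rw [if_congr hle rfl rfl]
  generalize x j = t, g x = y
  revert t y
  decide

lemma eq_one_or_exists_of_wt {c : V n} (hc : n - 1 ≤ wt c) :
    c = 1 ∨ ∃ j, c j ≠ 1 ∧ ∀ i, i ≠ j → c i = 1 := by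
  have hcard : #(univ.filter fun i => ¬ c i = 1) ≤ 1 := by
    have := card_filter_add_card_filter_not (s := univ) fun i => c i = 1
    rw [card_univ, Fintype.card_fin] at this
    unfold wt at hc
    omega
  rcases (univ.filter fun i => ¬ c i = 1).eq_empty_or_nonempty with h | ⟨j, hj⟩
  · exact .inl (funext fun i => by_contra fun hi => filter_eq_empty_iff.mp h (mem_univ i) hi)
  · refine .inr ⟨j, (mem_filter.mp hj).2, fun i hij => by_contra fun hi => hij ?_⟩
    exact card_le_one.mp hcard i (mem_filter.mpr ⟨mem_univ i, hi⟩) j hj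

lemma anfCoeff_eq_anfCoeff_one {g : V n → ZMod 2} (hg : ∀ j, ∑ x, x j * g x = 0) {c : V n}
    (hc : n - 1 ≤ wt c) : anfCoeff g c = anfCoeff g 1 := by
  rcases eq_one_or_exists_of_wt hc with rfl | ⟨j, hcj, hc⟩
  · rfl
  · rw [anfCoeff_eq_sum_add_sum_mul g hcj hc, hg, add_zero, anfCoeff_one]

lemma anfCoeff_sum_mono_of_wt {c : V n} (hc : n - 1 ≤ wt c) :
    anfCoeff (∑ a ∈ univ.filter fun a : V n => n - 1 ≤ wt a, mono a) c = 1 := by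
  rw [anfCoeff_sum, sum_congr rfl fun a _ => anfCoeff_mono a c, sum_ite_eq',
    if_pos (mem_filter.mpr ⟨mem_univ c, hc⟩)]

end QuadraticAPN

open QuadraticAPN

theorem stmt9_general {n : ℕ} (hn : Even n) (F Φ : V n → V n) (φ : V n → ZMod 2)
    (hq : IsQuadratic F) (hspec : PhiSpec F Φ φ) :
    ∀ i : Fin n, ∃ (f : V n → ZMod 2) (lam : ZMod 2),
      degB f ≤ n - 2 ∧
      ∀ x : V n, Φ x i =
        f x + lam * ∑ a ∈ Finset.univ.filter (fun a : V n => n - 1 ≤ wt a), mono a x := by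
  intro i
  set g : V n → ZMod 2 := fun x => Φ x i
  set top := univ.filter fun a : V n => n - 1 ≤ wt a
  have hg : ∀ j, ∑ x, x j * g x = 0 := hspec.sum_mul_eq_zero hn hq.1 i
  refine ⟨g + anfCoeff g 1 • ∑ a ∈ top, mono a, anfCoeff g 1,
    Finset.sup_le fun c hc => ?_, fun x => ?_⟩
  · by_contra hlt
    have hc' : n - 1 ≤ wt c := by omega
    refine (mem_filter.mp hc).2 ?_
    rw [anfCoeff_add, anfCoeff_smul, anfCoeff_sum_mono_of_wt hc', mul_one,
      anfCoeff_eq_anfCoeff_one hg hc', CharTwo.add_self_eq_zero]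
  · simp only [Pi.add_apply, Pi.smul_apply, Finset.sum_apply, smul_eq_mul, add_assoc,
      CharTwo.add_self_eq_zero, add_zero, g]

theorem stmt9 {n : ℕ} (hn : Even n) (h4 : 4 ≤ n) (F Φ : V n → V n) (φ : V n → ZMod 2)
    (hq : IsQuadratic F) (hAPN : IsAPN F) (hspec : PhiSpec F Φ φ) :
    ∀ i : Fin n, ∃ (f : V n → ZMod 2) (lam : ZMod 2),
      degB f ≤ n - 2 ∧
      ∀ x : V n, Φ x i =
        f x + lam * ∑ a ∈ Finset.univ.filter (fun a : V n => n - 1 ≤ wt a), mono a x :=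
  stmt9_general hn F Φ φ hq hspec
end
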